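/- arXiv:1910.04216 — 2 statements merged into one kernel-verified Lean document; each statement's English description precedes it below -/
import Mathlib

section
/- Let p, q ∈ AP be distinct, let I be an interval of nonnegative reals, and let c be a real with inf I < c < sup I. Let f be the signal with f(t) = {p} for t ∈ [0,c] and f(t) = {q} for t > c. Then, under the NEW satisfaction relation ⊨: f does not satisfy p U_I q, and f does satisfy (¬p) R_I (¬q) (via the third disjunct in the semantics of release). -/
/-! Every time `t₁` at which `q` holds lies after `c`, so the nonempty interval `(c, t₁)` sits
inside `(0, t₁)` and contains points where `p` fails: the until is violated. The release holds
through its third disjunct with `t₁ = c`, which belongs to `I` because `I` is an interval with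
points on both sides of `c`, and `t₂` any point of `I` beyond `c`. -/

open scoped NNReal ENNReal
open Set

namespace MITL

/-- A signal assigns to each nonnegative real time the set of atomic
propositions true at that time. -/
abbrev Signal (AP : Type*) := ℝ≥0 → Set AP

/-- The shifted signal `f^r`, defined by `f^r(t) = f(r+t)`. -/
def shift {AP : Type*} (f : Signal AP) (r : ℝ≥0) : Signal AP := fun t => f (r + t)

/-- MTL formulas over atomic propositions `AP`; the timing constraints are
(intended to be) intervals of nonnegative reals. -/
inductive MTL (AP : Type*) where
  | top : MTL AP
  | bot : MTL AP
  | atom : AP → MTL AP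
  | neg : MTL AP → MTL AP
  | disj : MTL AP → MTL AP → MTL AP
  | conj : MTL AP → MTL AP → MTL AP
  | until_ : MTL AP → MTL AP → Set ℝ≥0 → MTL AP
  | release : MTL AP → MTL AP → Set ℝ≥0 → MTL AP

variable {AP : Type*}

/-- The NEW satisfaction relation: `NSat f φ` means `f ⊨ φ`. -/
def NSat : Signal AP → MTL AP → Prop
  | _, .top => True
  | _, .bot => False
  | f, .atom p => p ∈ f 0
  | f, .neg φ => ¬ NSat f φ
  | f, .disj φ1 φ2 => NSat f φ1 ∨ NSat f φ2
  | f, .conj φ1 φ2 => NSat f φ1 ∧ NSat f φ2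
  | f, .until_ φ1 φ2 I =>
      ∃ t1 ∈ I, NSat (shift f t1) φ2 ∧ ∀ t2 ∈ Set.Ioo 0 t1, NSat (shift f t2) φ1
  | f, .release φ1 φ2 I =>
      (∀ t1 ∈ I, NSat (shift f t1) φ2) ∨
      (∃ t1 : ℝ≥0, 0 < t1 ∧ NSat (shift f t1) φ1 ∧
        ∀ t2 ∈ Set.Ioc 0 t1 ∩ I, NSat (shift f t2) φ2) ∨
      (∃ t1 ∈ I ∪ {sInf I}, ∃ t2 ∈ I, t1 < t2 ∧
        ∀ t3 ∈ I, (t3 ≤ t1 → NSat (shift f t3) φ2) ∧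
          (t1 < t3 → t3 ≤ t2 → NSat (shift f t3) φ1))

/-- Finite variability from the right of a signal `f` with respect to a formula
`φ`, relative to a satisfaction relation `Sat`. -/
def FinVarRight (Sat : Signal AP → MTL AP → Prop) (f : Signal AP) (φ : MTL AP) : Prop :=
  ∀ r : ℝ≥0,
    (∀ ε : ℝ≥0, 0 < ε → ∃ t ∈ Set.Ioo r (r + ε), Sat (shift f t) φ) →
    ∃ ε : ℝ≥0, 0 < ε ∧ ∀ t ∈ Set.Ioo r (r + ε), Sat (shift f t) φ

/-- Finite variability from the left of a signal `f` with respect to a formula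
`φ`, relative to a satisfaction relation `Sat`. -/
def FinVarLeft (Sat : Signal AP → MTL AP → Prop) (f : Signal AP) (φ : MTL AP) : Prop :=
  ∀ r : ℝ≥0, 0 < r →
    (∀ ε ∈ Set.Ioo 0 r, ∃ t ∈ Set.Ioo (r - ε) r, Sat (shift f t) φ) →
    ∃ ε ∈ Set.Ioo 0 r, ∀ t ∈ Set.Ioo (r - ε) r, Sat (shift f t) φ

/-- The supremum of a set of nonnegative reals, computed in `ℝ≥0∞`
(so that sets unbounded above have supremum `∞`). -/
noncomputable def supE (I : Set ℝ≥0) : ℝ≥0∞ := sSup ((fun x : ℝ≥0 => (x : ℝ≥0∞)) '' I)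

theorem nsat_shift_atom_iff (f : Signal AP) (t : ℝ≥0) (x : AP) :
    NSat (shift f t) (.atom x) ↔ x ∈ f t := by
  simp [NSat, shift]

def stepSignal (p q : AP) (c : ℝ≥0) : Signal AP :=
  fun t => if t ≤ c then {p} else {q}

section stepSignal

variable {p q : AP} {c t : ℝ≥0}

theorem nsat_shift_stepSignal_atom_of_le (ht : t ≤ c) (x : AP) :
    NSat (shift (stepSignal p q c) t) (.atom x) ↔ x = p := by
  simp [nsat_shift_atom_iff, stepSignal, ht]

theorem nsat_shift_stepSignal_atom_of_lt (ht : c < t) (x : AP) :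
    NSat (shift (stepSignal p q c) t) (.atom x) ↔ x = q := by
  simp [nsat_shift_atom_iff, stepSignal, not_le.mpr ht]

theorem not_nsat_until_stepSignal (hpq : p ≠ q) (I : Set ℝ≥0) :
    ¬ NSat (stepSignal p q c) (.until_ (.atom p) (.atom q) I) := by
  rintro ⟨t₁, -, hq, hp⟩
  have hct₁ : c < t₁ := by
    by_contra! h
    exact hpq ((nsat_shift_stepSignal_atom_of_le h q).mp hq).symm
  obtain ⟨t₂, hct₂, ht₂t₁⟩ := exists_between hct₁
  exact hpq ((nsat_shift_stepSignal_atom_of_lt hct₂ p).mp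
    (hp t₂ ⟨pos_of_gt hct₂, ht₂t₁⟩))

theorem nsat_release_stepSignal (hpq : p ≠ q) {I : Set ℝ≥0} (hc : c ∈ I)
    {b : ℝ≥0} (hb : b ∈ I) (hcb : c < b) :
    NSat (stepSignal p q c) (.release (.neg (.atom p)) (.neg (.atom q)) I) := by
  refine Or.inr (Or.inr ⟨c, Or.inl hc, b, hb, hcb, fun t _ => ⟨fun ht => ?_, fun ht _ => ?_⟩⟩)
  · exact fun h => hpq ((nsat_shift_stepSignal_atom_of_le ht q).mp h).symm
  · exact fun h => hpq ((nsat_shift_stepSignal_atom_of_lt ht p).mp h)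

end stepSignal

theorem exists_mem_gt_of_lt_supE {I : Set ℝ≥0} {c : ℝ≥0} (hc : (c : ℝ≥0∞) < supE I) :
    ∃ b ∈ I, c < b := by
  obtain ⟨_, ⟨b, hb, rfl⟩, hcb⟩ := lt_sSup_iff.mp hc
  exact ⟨b, hb, ENNReal.coe_lt_coe.mp hcb⟩

theorem _root_.Set.OrdConnected.mem_of_csInf_lt_of_le_mem {α : Type*}
    [ConditionallyCompleteLinearOrder α] {I : Set α} (hI : I.OrdConnected)
    {c : α} (hc : sInf I < c) {b : α} (hb : b ∈ I) (hcb : c ≤ b) : c ∈ I := by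
  obtain ⟨a, ha, hac⟩ := exists_lt_of_csInf_lt ⟨b, hb⟩ hc
  exact hI.out ha hb ⟨hac.le, hcb⟩

theorem new_semantics_dual_example (p q : AP) (hpq : p ≠ q)
    (I : Set ℝ≥0) (hI : I.OrdConnected)
    (c : ℝ≥0) (hc1 : sInf I < c) (hc2 : (c : ℝ≥0∞) < supE I)
    (f : Signal AP) (hf : f = fun t => if t ≤ c then ({p} : Set AP) else ({q} : Set AP)) :
    ¬ NSat f (.until_ (.atom p) (.atom q) I) ∧
    NSat f (.release (.neg (.atom p)) (.neg (.atom q)) I) := by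
  obtain rfl : f = stepSignal p q c := hf
  obtain ⟨b, hb, hcb⟩ := exists_mem_gt_of_lt_supE hc2
  exact ⟨not_nsat_until_stepSignal hpq I,
    nsat_release_stepSignal hpq (hI.mem_of_csInf_lt_of_le_mem hc1 hb hcb.le) hb hcb⟩

end MITL
end

section
/- For every signal f, MTL formulas φ1 and φ2, and nonempty interval I of nonnegative reals with 0 < inf I and sup I < ∞, there exist two intervals T1, T2 ⊆ ℝ≥0 such that: (a) t1 < t2 for all t1 ∈ T1 and t2 ∈ T2; and (b) for all t ∈ ℝ≥0, (t < Step(I) and f^t ⊨ φ1 U_I φ2 under the new satisfaction relation) if and only if t ∈ T1 ∪ T2. -/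
/-!
The set of times `t < Step I` at which `φ1 U_I φ2` holds contains no pattern
`in, out, in, out, in`, so it has at most two components. Since `Step I ≤ inf I`, the
`φ1`-stretch of any witness reaches past `Step I`, so the stretches of two satisfied times
`t₁ < t₃` overlap. If the formula fails at some `t₂` in between, the deadline `s₃` of the
witness for `t₃` is at least `t₂ + sup I`; as `Step I ≤ sup I - inf I`, the same deadline
then lies in `t + I` for every later `t < Step I`.
-/

open scoped NNReal ENNReal
open Set

namespace MITL

variable {AP : Type*}

open Classical in
/-- The step size of a (bounded nonempty) interval. -/
noncomputable def Step (I : Set ℝ≥0) : ℝ≥0 :=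
  if sSup I - sInf I < sInf I then sSup I - sInf I else sInf I

theorem _root_.Set.OrdConnected.csSup_le_of_notMem {α : Type*}
    [ConditionallyCompleteLinearOrder α] {I : Set α} (hI : I.OrdConnected) {x y : α}
    (hy : y ∈ I) (hyx : y ≤ x) (hx : x ∉ I) : sSup I ≤ x :=
  csSup_le ⟨y, hy⟩ fun _ hz => le_of_not_ge fun hxz => hx (hI.out hy hz ⟨hyx, hxz⟩)

theorem _root_.Set.OrdConnected.mem_of_csInf_lt {α : Type*}
    [ConditionallyCompleteLinearOrder α] {I : Set α} (hI : I.OrdConnected) {x y : α}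
    (hx : sInf I < x) (hy : y ∈ I) (hxy : x ≤ y) : x ∈ I := by
  obtain ⟨z, hz, hzx⟩ := exists_lt_of_csInf_lt ⟨y, hy⟩ hx
  exact hI.out hz hy ⟨hzx.le, hxy⟩

theorem _root_.Set.exists_ordConnected_union_of_forall_mem_or_mem {α : Type*} [LinearOrder α]
    (W : Set α) (hW : ∀ t₁ t₂ t₃ t₄ t₅, t₁ < t₂ → t₂ < t₃ → t₃ < t₄ → t₄ < t₅ →
      t₁ ∈ W → t₃ ∈ W → t₅ ∈ W → t₂ ∈ W ∨ t₄ ∈ W) :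
    ∃ T₁ T₂ : Set α, T₁.OrdConnected ∧ T₂.OrdConnected ∧
      (∀ x ∈ T₁, ∀ y ∈ T₂, x < y) ∧ W = T₁ ∪ T₂ := by
  by_cases hgap : ∃ g ∉ W, (∃ x ∈ W, x < g) ∧ ∃ y ∈ W, g < y
  · obtain ⟨g, hg, ⟨x, hx, hxg⟩, y, hy, hgy⟩ := hgap
    refine ⟨W ∩ Iic g, W ∩ Ioi g, ordConnected_of_Ioo ?_, ordConnected_of_Ioo ?_,
      fun a ha b hb => ha.2.trans_lt hb.2, ?_⟩
    · rintro u ⟨hu, -⟩ v ⟨hv, hvg⟩ - w ⟨huw, hwv⟩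
      have hvg' : v < g := hvg.lt_of_ne (ne_of_mem_of_not_mem hv hg)
      refine ⟨?_, hwv.le.trans hvg⟩
      by_contra hw
      exact (hW u w v g y huw hwv hvg' hgy hu hv hy).elim hw hg
    · rintro u ⟨hu, hgu⟩ v ⟨hv, -⟩ - w ⟨huw, hwv⟩
      refine ⟨?_, hgu.trans huw⟩
      by_contra hw
      exact (hW x g u w v hxg hgu huw hwv hx hu hv).elim hg hw
    · ext t
      simp only [mem_union, mem_inter_iff, ← and_or_left, mem_Iic, mem_Ioi, le_or_gt, and_true]
  · refine ⟨∅, W, ordConnected_empty, ordConnected_of_Ioo ?_, by simp, by simp⟩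
    rintro u hu v hv - w ⟨huw, hwv⟩
    by_contra hw
    exact hgap ⟨w, hw, ⟨u, hu, huw⟩, v, hv, hwv⟩

theorem Step_eq_min (I : Set ℝ≥0) : Step I = min (sSup I - sInf I) (sInf I) := by
  unfold Step
  split_ifs with h
  exacts [(min_eq_left h.le).symm, (min_eq_right (not_lt.1 h)).symm]

theorem lt_Step_iff {I : Set ℝ≥0} {t : ℝ≥0} :
    t < Step I ↔ t + sInf I < sSup I ∧ t < sInf I := by
  rw [Step_eq_min, lt_min_iff, lt_tsub_iff_right]

theorem shift_shift (f : Signal AP) (t d : ℝ≥0) : shift (shift f t) d = shift f (t + d) := by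
  funext s
  simp [shift, add_assoc]

theorem NSat_shift_until_iff {f : Signal AP} {φ1 φ2 : MTL AP} {I : Set ℝ≥0} {t : ℝ≥0} :
    NSat (shift f t) (.until_ φ1 φ2 I) ↔
      ∃ s, t ≤ s ∧ s - t ∈ I ∧ NSat (shift f s) φ2 ∧ ∀ u ∈ Ioo t s, NSat (shift f u) φ1 := by
  simp only [NSat, shift_shift]
  constructor
  · rintro ⟨d, hd, h2, h1⟩
    refine ⟨t + d, le_self_add, by rwa [add_tsub_cancel_left], h2, fun u ⟨htu, hus⟩ => ?_⟩
    have := h1 (u - t) ⟨tsub_pos_of_lt htu, (tsub_lt_iff_left htu.le).2 hus⟩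
    rwa [add_tsub_cancel_of_le htu.le] at this
  · rintro ⟨s, hts, hs, h2, h1⟩
    refine ⟨s - t, hs, by rwa [add_tsub_cancel_of_le hts], fun e ⟨he0, hes⟩ => ?_⟩
    exact h1 (t + e) ⟨lt_add_of_pos_right t he0, lt_tsub_iff_left.1 hes⟩

theorem NSat_shift_until_of_lt_of_not {f : Signal AP} {φ1 φ2 : MTL AP} {I : Set ℝ≥0}
    (hI : I.OrdConnected) {t₁ t₂ t₃ t₄ : ℝ≥0} (h12 : t₁ < t₂) (h23 : t₂ < t₃) (h34 : t₃ < t₄)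
    (h4 : t₄ < Step I) (hU₁ : NSat (shift f t₁) (.until_ φ1 φ2 I))
    (hU₂ : ¬ NSat (shift f t₂) (.until_ φ1 φ2 I)) (hU₃ : NSat (shift f t₃) (.until_ φ1 φ2 I)) :
    NSat (shift f t₄) (.until_ φ1 φ2 I) := by
  rw [NSat_shift_until_iff] at hU₁ hU₂ hU₃ ⊢
  obtain ⟨s₁, -, hs₁, -, hφ1₁⟩ := hU₁
  obtain ⟨s₃, ht₃s₃, hs₃, hφ2₃, hφ1₃⟩ := hU₃
  obtain ⟨hStep_sSup, hStep_sInf⟩ := lt_Step_iff.1 h4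
  have ht₃s₁ : t₃ < s₁ :=
    (h34.trans hStep_sInf).trans_le ((csInf_le (OrderBot.bddBelow I) hs₁).trans tsub_le_self)
  have hφ1 : ∀ u ∈ Ioo t₂ s₃, NSat (shift f u) φ1 := fun u ⟨ht₂u, hus₃⟩ =>
    (le_or_gt u t₃).elim (fun hut₃ => hφ1₁ u ⟨h12.trans ht₂u, hut₃.trans_lt ht₃s₁⟩)
      (fun ht₃u => hφ1₃ u ⟨ht₃u, hus₃⟩)
  have ht₂s₃ : t₂ ≤ s₃ := h23.le.trans ht₃s₃
  have hsSup : sSup I ≤ s₃ - t₂ :=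
    hI.csSup_le_of_notMem hs₃ (tsub_le_tsub_left h23.le s₃)
      fun hs₂ => hU₂ ⟨s₃, ht₂s₃, hs₂, hφ2₃, hφ1⟩
  have hsInf : sInf I < s₃ - t₄ :=
    lt_tsub_iff_left.2 (by
      calc t₄ + sInf I < sSup I := hStep_sSup
        _ ≤ s₃ - t₂ := hsSup
        _ ≤ s₃ := tsub_le_self)
  refine ⟨s₃, (tsub_pos_iff_lt.1 (pos_of_gt hsInf)).le,
    hI.mem_of_csInf_lt hsInf hs₃ (tsub_le_tsub_left h34.le s₃), hφ2₃,
    fun u ⟨ht₄u, hus₃⟩ => hφ1₃ u ⟨h34.trans ht₄u, hus₃⟩⟩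

theorem until_finitely_variable_general (f : Signal AP) (φ1 φ2 : MTL AP)
    (I : Set ℝ≥0) (hI : I.OrdConnected) :
    ∃ T1 T2 : Set ℝ≥0, T1.OrdConnected ∧ T2.OrdConnected ∧
      (∀ t1 ∈ T1, ∀ t2 ∈ T2, t1 < t2) ∧
      ∀ t : ℝ≥0,
        (t < Step I ∧ NSat (shift f t) (.until_ φ1 φ2 I)) ↔ t ∈ T1 ∪ T2 := by
  set W := {t | t < Step I ∧ NSat (shift f t) (.until_ φ1 φ2 I)}
  have hW : ∀ t₁ t₂ t₃ t₄ t₅, t₁ < t₂ → t₂ < t₃ → t₃ < t₄ → t₄ < t₅ →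
      t₁ ∈ W → t₃ ∈ W → t₅ ∈ W → t₂ ∈ W ∨ t₄ ∈ W := by
    rintro t₁ t₂ t₃ t₄ t₅ h12 h23 h34 h45 ⟨-, hU₁⟩ ⟨hStep₃, hU₃⟩ ⟨hStep₅, -⟩
    rw [or_iff_not_imp_left]
    intro ht₂
    have hU₂ : ¬ NSat (shift f t₂) (.until_ φ1 φ2 I) := fun h => ht₂ ⟨h23.trans hStep₃, h⟩
    have hStep₄ := h45.trans hStep₅
    exact ⟨hStep₄, NSat_shift_until_of_lt_of_not hI h12 h23 h34 hStep₄ hU₁ hU₂ hU₃⟩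
  obtain ⟨T1, T2, hT1, hT2, hT12, hWT⟩ := exists_ordConnected_union_of_forall_mem_or_mem W hW
  exact ⟨T1, T2, hT1, hT2, hT12, fun t => Set.ext_iff.1 hWT t⟩

theorem until_finitely_variable (f : Signal AP) (φ1 φ2 : MTL AP)
    (I : Set ℝ≥0) (hI : I.OrdConnected) (hne : I.Nonempty)
    (hinf : 0 < sInf I) (hbdd : BddAbove I) :
    ∃ T1 T2 : Set ℝ≥0, T1.OrdConnected ∧ T2.OrdConnected ∧
      (∀ t1 ∈ T1, ∀ t2 ∈ T2, t1 < t2) ∧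
      ∀ t : ℝ≥0,
        (t < Step I ∧ NSat (shift f t) (.until_ φ1 φ2 I)) ↔ t ∈ T1 ∪ T2 :=
  until_finitely_variable_general f φ1 φ2 I hI

end MITL
end
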